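/- Let P be a string whose SA-interval is the nonempty integer interval {j,...,k}, and let c be a character with c ≠ $. Then the SA-interval of the string cP (the concatenation of c with P) equals the integer interval {C(c) + rank_c(j−1) + 1, ..., C(c) + rank_c(k)}, which is empty exactly when rank_c(j−1) = rank_c(k), i.e., when c does not occur in BWT[j..k]. -/

import Mathlib

/-!
If `T[SA[i]..n] = c :: T[SA[i']..n]`, the suffixes not exceeding `T[SA[i]..n]` are those starting
with a character `< c`, and those of the form `c :: s` with `s ≤ T[SA[i']..n]`; via `q ↦ q + 1`
the latter correspond to the indices `p ≤ i'` with `BWT[p] = c`. Hence `i = C(c) + rank_c(i')`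
(the LF-mapping), so the SA-interval of `cP` is the image of `{i' ∈ [j, k] | BWT[i'] = c}` under
`i' ↦ C(c) + rank_c(i')`, and `rank_c` maps this set onto `(rank_c(j-1), rank_c(k)]`.
-/

variable {α : Type*} [LinearOrder α]

/-- The suffix `T[p..n]` of a 1-indexed string `T[1..n]`, as a list. -/
def sfx (T : ℕ → α) (n p : ℕ) : List α :=
  (List.range (n + 1 - p)).map (fun d => T (p + d))

/-- The Burrows–Wheeler transform determined by the text `T`, its suffix array `SA`,
and the end-of-string character `dollar`:  `BWT[i] = T[SA[i]-1]` if `SA[i] > 1`,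
and `BWT[i] = $` if `SA[i] = 1`. -/
def bwt (T : ℕ → α) (SA : ℕ → ℕ) (dollar : α) (i : ℕ) : α :=
  if SA i = 1 then dollar else T (SA i - 1)

open Finset

-- With `p := (BWT[·] = c)` this is the paper's `rank_c`.
def rank (p : ℕ → Prop) [DecidablePred p] (m : ℕ) : ℕ := #{i ∈ Icc 1 m | p i}

section rank

variable (p : ℕ → Prop) [DecidablePred p]

lemma rank_zero : rank p 0 = 0 := by
  simp [rank]

lemma rank_mono : Monotone (rank p) := fun _ _ h =>
  card_le_card (filter_subset_filter _ (Icc_subset_Icc_right h))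

lemma rank_eq_rank_sub_one_add {i : ℕ} (hi : 1 ≤ i) :
    rank p i = rank p (i - 1) + if p i then 1 else 0 := by
  rw [rank, rank, ← insert_Icc_sub_one_right_eq_Icc hi, filter_insert]
  split_ifs
  · rw [card_insert_of_notMem (by simp only [mem_filter, mem_Icc]; omega)]
  · rfl

variable {p}

lemma exists_rank_eq_iff {j k m : ℕ} (hj : 1 ≤ j) :
    (∃ i, j ≤ i ∧ i ≤ k ∧ p i ∧ rank p i = m) ↔ rank p (j - 1) < m ∧ m ≤ rank p k := by
  constructor
  · rintro ⟨i, hji, hik, hpi, rfl⟩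
    have hstep := rank_eq_rank_sub_one_add p (hj.trans hji)
    simp only [hpi, if_true] at hstep
    have := rank_mono p (Nat.sub_le_sub_right hji 1)
    have := rank_mono p hik
    omega
  · rintro ⟨hlo, hhi⟩
    have hex : ∃ i, m ≤ rank p i := ⟨k, hhi⟩
    set i := Nat.find hex
    have hi : m ≤ rank p i := Nat.find_spec hex
    have hik : i ≤ k := Nat.find_min' hex hhi
    have hi0 : 1 ≤ i := by
      by_contra! h0
      have : rank p i = 0 := by rw [Nat.lt_one_iff.1 h0, rank_zero]
      omega
    have hprev : ¬ m ≤ rank p (i - 1) := Nat.find_min hex (by omega)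
    have hji : j ≤ i := by
      by_contra! hij
      have := rank_mono p (show i ≤ j - 1 by omega)
      omega
    have hstep := rank_eq_rank_sub_one_add p hi0
    by_cases hpi : p i
    · simp only [hpi, if_true] at hstep
      exact ⟨i, hji, hik, hpi, by omega⟩
    · simp only [hpi, if_false] at hstep
      omega

lemma rank_eq_rank_iff {j k : ℕ} (hj : 1 ≤ j) (hjk : j ≤ k) :
    rank p (j - 1) = rank p k ↔ ∀ i, j ≤ i → i ≤ k → ¬ p i := by
  have hle := rank_mono p (show j - 1 ≤ k by omega)
  constructor
  · intro h i hji hik hpi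
    have := (exists_rank_eq_iff hj).1 ⟨i, hji, hik, hpi, rfl⟩
    have := rank_mono p hik
    omega
  · intro h
    by_contra hne
    obtain ⟨i, hji, hik, hpi, -⟩ := (exists_rank_eq_iff (m := rank p k) hj).2 ⟨by omega, le_rfl⟩
    exact h i hji hik hpi

end rank

lemma sfx_eq_cons {β : Type*} (T : ℕ → β) {n p : ℕ} (h : p ≤ n) :
    sfx T n p = T p :: sfx T n (p + 1) := by
  rw [sfx, sfx, show n + 1 - p = n - p + 1 by omega, List.range_succ_eq_map, List.map_cons,
    List.map_map, show n + 1 - (p + 1) = n - p by omega]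
  congr 1
  exact List.map_congr_left fun d _ => by
    simp only [Function.comp_apply, Nat.add_assoc, Nat.add_comm 1]

lemma bwt_eq_iff {β : Type*} {T : ℕ → β} {SA : ℕ → ℕ} {dollar c : β} (hc : c ≠ dollar) (i : ℕ) :
    bwt T SA dollar i = c ↔ SA i ≠ 1 ∧ T (SA i - 1) = c := by
  unfold bwt
  split_ifs with h <;> simp [h, hc.symm]

-- Core's `List.cons_le_cons_iff` is stated for core's `List.le`, not for the `≤` of Mathlib's
-- lexicographic `LinearOrder (List α)` used here.
lemma List.cons_le_cons_iff' {a b : α} {s t : List α} :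
    a :: s ≤ b :: t ↔ a < b ∨ a = b ∧ s ≤ t := by
  simp only [le_iff_lt_or_eq, List.cons_lt_cons_iff, List.cons.injEq]
  tauto

structure IsSuffixArray (T : ℕ → α) (n : ℕ) (SA : ℕ → ℕ) : Prop where
  mapsTo : Set.MapsTo SA (Set.Icc 1 n) (Set.Icc 1 n)
  surjOn : Set.SurjOn SA (Set.Icc 1 n) (Set.Icc 1 n)
  strictMonoOn : StrictMonoOn (fun i => sfx T n (SA i)) (Set.Icc 1 n)

namespace IsSuffixArray

variable {T : ℕ → α} {n : ℕ} {SA : ℕ → ℕ}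

lemma injOn (hSA : IsSuffixArray T n SA) : Set.InjOn SA (Set.Icc 1 n) :=
  Set.InjOn.of_comp (g := sfx T n) hSA.strictMonoOn.injOn

lemma card_filter_sfx_le (hSA : IsSuffixArray T n SA) {i : ℕ} (hi : i ∈ Set.Icc 1 n) :
    #{q ∈ Icc 1 n | sfx T n q ≤ sfx T n (SA i)} = i := by
  conv_rhs => rw [← Nat.add_sub_cancel i 1, ← Nat.card_Icc 1 i]
  symm
  refine card_bij (fun i' _ => SA i') (fun i' hi' => ?_) (fun i₁ h₁ i₂ h₂ => ?_) fun q hq => ?_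
  · obtain ⟨h1, hle⟩ := mem_Icc.1 hi'
    have hi'n : i' ∈ Set.Icc 1 n := ⟨h1, hle.trans hi.2⟩
    exact mem_filter.2 ⟨mem_Icc.2 (hSA.mapsTo hi'n), (hSA.strictMonoOn.le_iff_le hi'n hi).2 hle⟩
  · exact hSA.injOn ⟨(mem_Icc.1 h₁).1, (mem_Icc.1 h₁).2.trans hi.2⟩
      ⟨(mem_Icc.1 h₂).1, (mem_Icc.1 h₂).2.trans hi.2⟩
  · obtain ⟨hq, hle⟩ := mem_filter.1 hq
    obtain ⟨i', hi', rfl⟩ := hSA.surjOn (mem_Icc.1 hq)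
    exact ⟨i', mem_Icc.2 ⟨hi'.1, (hSA.strictMonoOn.le_iff_le hi' hi).1 hle⟩, rfl⟩

-- The LF-mapping of backward search.
lemma eq_card_lt_add_rank (hSA : IsSuffixArray T n SA) {dollar c : α} (hTn : T n = dollar)
    (hc : c ≠ dollar) {i i' : ℕ} (hi : i ∈ Set.Icc 1 n) (hi' : i' ∈ Set.Icc 1 n)
    (hsucc : SA i' = SA i + 1) (hTc : T (SA i) = c) :
    i = #{q ∈ Icc 1 n | T q < c} + rank (fun p => bwt T SA dollar p = c) i' := by
  set s := sfx T n (SA i')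
  have hsfx : sfx T n (SA i) = c :: s := by rw [sfx_eq_cons T (hSA.mapsTo hi).2, hTc, ← hsucc]
  have hsplit : {q ∈ Icc 1 n | sfx T n q ≤ c :: s} =
      {q ∈ Icc 1 n | T q < c} ∪ {q ∈ Icc 1 n | T q = c ∧ sfx T n (q + 1) ≤ s} := by
    rw [← filter_or]
    refine filter_congr fun q hq => ?_
    rw [sfx_eq_cons T (mem_Icc.1 hq).2, List.cons_le_cons_iff']
  have hrank : #{q ∈ Icc 1 n | T q = c ∧ sfx T n (q + 1) ≤ s} =
      rank (fun p => bwt T SA dollar p = c) i' := by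
    have hmem : ∀ p ∈ {p ∈ Icc 1 i' | bwt T SA dollar p = c},
        p ≤ i' ∧ p ∈ Set.Icc 1 n ∧ 2 ≤ SA p ∧ T (SA p - 1) = c := by
      intro p hp
      obtain ⟨⟨h1, hpi'⟩, hbwt⟩ := (mem_filter.1 hp).imp_left mem_Icc.1
      obtain ⟨hne, hTp⟩ := (bwt_eq_iff hc p).1 hbwt
      have hp : p ∈ Set.Icc 1 n := ⟨h1, hpi'.trans hi'.2⟩
      exact ⟨hpi', hp, by have := (hSA.mapsTo hp).1; omega, hTp⟩
    symm
    refine card_bij (fun p _ => SA p - 1) (fun p hp => ?_) (fun p₁ hp₁ p₂ hp₂ h => ?_)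
      fun q hq => ?_
    · obtain ⟨hpi', hp, hSAp, hTp⟩ := hmem p hp
      have := (hSA.mapsTo hp).2
      refine mem_filter.2 ⟨mem_Icc.2 ⟨by omega, by omega⟩, hTp, ?_⟩
      rw [Nat.sub_add_cancel (by omega : 1 ≤ SA p)]
      exact (hSA.strictMonoOn.le_iff_le hp hi').2 hpi'
    · obtain ⟨-, hp₁, h₁, -⟩ := hmem p₁ hp₁
      obtain ⟨-, hp₂, h₂, -⟩ := hmem p₂ hp₂
      exact hSA.injOn hp₁ hp₂ (by omega)
    · obtain ⟨hq, hTq, hle⟩ := mem_filter.1 hq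
      obtain ⟨hq1, hqn⟩ := mem_Icc.1 hq
      have hqn : q < n := lt_of_le_of_ne hqn fun h => hc (hTq ▸ h ▸ hTn)
      obtain ⟨p, hp, hSAp⟩ := hSA.surjOn (show q + 1 ∈ Set.Icc 1 n from ⟨by omega, hqn⟩)
      refine ⟨p, mem_filter.2 ⟨mem_Icc.2 ⟨hp.1, ?_⟩, ?_⟩, by simp [hSAp]⟩
      · rw [← hSAp] at hle
        exact (hSA.strictMonoOn.le_iff_le hp hi').1 hle
      · exact (bwt_eq_iff hc p).2 ⟨by omega, by simpa [hSAp] using hTq⟩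
  calc i = #{q ∈ Icc 1 n | sfx T n q ≤ c :: s} := by rw [← hsfx, hSA.card_filter_sfx_le hi]
    _ = _ := by
      rw [hsplit, card_union_of_disjoint (disjoint_filter.2 fun q _ h h' => h.ne h'.1), hrank]

lemma cons_isPrefix_iff_exists_rank (hSA : IsSuffixArray T n SA) {dollar c : α}
    (hTn : T n = dollar) (hc : c ≠ dollar) {P : List α} {j k : ℕ}
    (hint : ∀ i, (1 ≤ i ∧ i ≤ n ∧ P <+: sfx T n (SA i)) ↔ (j ≤ i ∧ i ≤ k)) (i : ℕ) :
    (1 ≤ i ∧ i ≤ n ∧ (c :: P) <+: sfx T n (SA i)) ↔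
      ∃ i', j ≤ i' ∧ i' ≤ k ∧ bwt T SA dollar i' = c ∧
        i = #{q ∈ Icc 1 n | T q < c} + rank (fun p => bwt T SA dollar p = c) i' := by
  constructor
  · rintro ⟨hi1, hin, hpre⟩
    have hi : i ∈ Set.Icc 1 n := ⟨hi1, hin⟩
    obtain ⟨hSAi1, hSAin⟩ := hSA.mapsTo hi
    obtain ⟨hTc, hP⟩ := List.cons_prefix_cons.1 (sfx_eq_cons T hSAin ▸ hpre)
    have hSAin' : SA i < n := lt_of_le_of_ne hSAin fun h => hc (by rw [hTc, h, hTn])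
    obtain ⟨i', hi', hsucc⟩ := hSA.surjOn (show SA i + 1 ∈ Set.Icc 1 n from ⟨by omega, hSAin'⟩)
    obtain ⟨hji', hi'k⟩ := (hint i').1 ⟨hi'.1, hi'.2, hsucc ▸ hP⟩
    exact ⟨i', hji', hi'k, (bwt_eq_iff hc i').2 ⟨by omega, by simp [hsucc, hTc]⟩,
      hSA.eq_card_lt_add_rank hTn hc hi hi' hsucc hTc.symm⟩
  · rintro ⟨i', hji', hi'k, hbwt, rfl⟩
    obtain ⟨hi'1, hi'n, hP⟩ := (hint i').2 ⟨hji', hi'k⟩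
    have hi' : i' ∈ Set.Icc 1 n := ⟨hi'1, hi'n⟩
    obtain ⟨hne, hTc⟩ := (bwt_eq_iff hc i').1 hbwt
    obtain ⟨hSAi'1, hSAi'n⟩ := hSA.mapsTo hi'
    obtain ⟨i, hi, hSAi⟩ := hSA.surjOn (show SA i' - 1 ∈ Set.Icc 1 n from ⟨by omega, by omega⟩)
    have hsucc : SA i' = SA i + 1 := by omega
    rw [← hSA.eq_card_lt_add_rank hTn hc hi hi' hsucc (hSAi ▸ hTc)]
    refine ⟨hi.1, hi.2, ?_⟩
    rw [sfx_eq_cons T (hSA.mapsTo hi).2, List.cons_prefix_cons, ← hsucc, hSAi, hTc]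
    exact ⟨rfl, hP⟩

end IsSuffixArray

theorem statement11_general
    (n : ℕ) (T : ℕ → α) (dollar : α) (SA : ℕ → ℕ)
    -- `T[1..n]` is a string of length `n ≥ 1` ending with `$`,
    -- which is smaller than every other character and occurs only at position `n`
    (hTn : T n = dollar)
    -- `SA` is a permutation of `{1,...,n}` sorting the suffixes lexicographically
    (hSAran : ∀ i, 1 ≤ i → i ≤ n → 1 ≤ SA i ∧ SA i ≤ n)
    (hSAsurj : ∀ p, 1 ≤ p → p ≤ n → ∃ i, 1 ≤ i ∧ i ≤ n ∧ SA i = p)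
    (hSAmono : ∀ i j, 1 ≤ i → i < j → j ≤ n → sfx T n (SA i) < sfx T n (SA j))
    (P : List α) (j k : ℕ) (hjk : j ≤ k)
    -- `{j,...,k}` is the SA-interval of `P` (nonempty since `j ≤ k`)
    (hint : ∀ i, (1 ≤ i ∧ i ≤ n ∧ P <+: sfx T n (SA i)) ↔ (j ≤ i ∧ i ≤ k))
    (c : α) (hc : c ≠ dollar) :
    (∀ i, (1 ≤ i ∧ i ≤ n ∧ (c :: P) <+: sfx T n (SA i)) ↔
        (((Finset.Icc 1 n).filter (fun p => T p < c)).card +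
           ((Finset.Icc 1 (j - 1)).filter (fun p => bwt T SA dollar p = c)).card + 1 ≤ i ∧
         i ≤ ((Finset.Icc 1 n).filter (fun p => T p < c)).card +
           ((Finset.Icc 1 k).filter (fun p => bwt T SA dollar p = c)).card)) ∧
    (((Finset.Icc 1 (j - 1)).filter (fun p => bwt T SA dollar p = c)).card =
        ((Finset.Icc 1 k).filter (fun p => bwt T SA dollar p = c)).card ↔
      ∀ i, j ≤ i → i ≤ k → bwt T SA dollar i ≠ c) := by
  have hSA : IsSuffixArray T n SA :=
    ⟨fun i hi => hSAran i hi.1 hi.2,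
      fun p hp => (hSAsurj p hp.1 hp.2).imp fun _ h => ⟨⟨h.1, h.2.1⟩, h.2.2⟩,
      fun a ha b hb hab => hSAmono a b ha.1 hab hb.2⟩
  have hj : 1 ≤ j := ((hint j).2 ⟨le_rfl, hjk⟩).1
  refine ⟨fun i => ?_, rank_eq_rank_iff hj hjk⟩
  rw [hSA.cons_isPrefix_iff_exists_rank hTn hc hint]
  set C := #{q ∈ Icc 1 n | T q < c}
  have hrank := fun m =>
    exists_rank_eq_iff (p := fun p => bwt T SA dollar p = c) (k := k) (m := m) hj
  simp only [rank] at hrank ⊢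
  constructor
  · rintro ⟨i', hji', hi'k, hbwt, rfl⟩
    have := (hrank _).1 ⟨i', hji', hi'k, hbwt, rfl⟩
    omega
  · rintro ⟨hlo, hhi⟩
    obtain ⟨i', hji', hi'k, hbwt, hi'⟩ := (hrank (i - C)).2 (by omega)
    exact ⟨i', hji', hi'k, hbwt, by omega⟩

/-- **backward search.**  If `{j,...,k}` is the nonempty SA-interval of
`P` and `c ≠ $`, then the SA-interval of `cP` is exactly
`{C(c) + rank_c(j-1) + 1, ..., C(c) + rank_c(k)}`, which is empty exactly when
`rank_c(j-1) = rank_c(k)`, i.e. when `c` does not occur in `BWT[j..k]`. -/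
theorem statement11
    (n : ℕ) (T : ℕ → α) (dollar : α) (SA : ℕ → ℕ)
    -- `T[1..n]` is a string of length `n ≥ 1` ending with `$`,
    -- which is smaller than every other character and occurs only at position `n`
    (hn : 1 ≤ n) (hTn : T n = dollar)
    (hdollar : ∀ p, 1 ≤ p → p < n → dollar < T p)
    -- `SA` is a permutation of `{1,...,n}` sorting the suffixes lexicographically
    (hSAran : ∀ i, 1 ≤ i → i ≤ n → 1 ≤ SA i ∧ SA i ≤ n)
    (hSAsurj : ∀ p, 1 ≤ p → p ≤ n → ∃ i, 1 ≤ i ∧ i ≤ n ∧ SA i = p)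
    (hSAmono : ∀ i j, 1 ≤ i → i < j → j ≤ n → sfx T n (SA i) < sfx T n (SA j))
    (P : List α) (j k : ℕ) (hjk : j ≤ k)
    -- `{j,...,k}` is the SA-interval of `P` (nonempty since `j ≤ k`)
    (hint : ∀ i, (1 ≤ i ∧ i ≤ n ∧ P <+: sfx T n (SA i)) ↔ (j ≤ i ∧ i ≤ k))
    (c : α) (hc : c ≠ dollar) :
    (∀ i, (1 ≤ i ∧ i ≤ n ∧ (c :: P) <+: sfx T n (SA i)) ↔
        (((Finset.Icc 1 n).filter (fun p => T p < c)).card +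
           ((Finset.Icc 1 (j - 1)).filter (fun p => bwt T SA dollar p = c)).card + 1 ≤ i ∧
         i ≤ ((Finset.Icc 1 n).filter (fun p => T p < c)).card +
           ((Finset.Icc 1 k).filter (fun p => bwt T SA dollar p = c)).card)) ∧
    (((Finset.Icc 1 (j - 1)).filter (fun p => bwt T SA dollar p = c)).card =
        ((Finset.Icc 1 k).filter (fun p => bwt T SA dollar p = c)).card ↔
      ∀ i, j ≤ i → i ≤ k → bwt T SA dollar i ≠ c) :=
  statement11_general n T dollar SA hTn hSAran hSAsurj hSAmono P j k hjk hint c hc
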